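/- For all even n and n-bit two's complement integers a, b (with bits a_i, b_j and convention a_{−1}=b_{−1}=0), a·b = Σ_{i=0}^{n/2−1} Σ_{j=0}^{n/2−1} 4^{i+j} · B(a_{2i+1},a_{2i},a_{2i−1}) · B(b_{2j+1},b_{2j},b_{2j−1}), where B(x,y,z) = −2x+y+z. -/
import Mathlib

/-- Booth encoding function `B(x,y,z) = -2x + y + z`. -/
def BoothB (x y z : ℤ) : ℤ := -2 * x + y + z

lemma booth_key (a : ℤ → ℤ) (ham1 : a (-1) = 0) :
    ∀ m : ℕ, 1 ≤ m →
    (∑ i ∈ Finset.range m, 4 ^ i *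
      BoothB (a (2 * (i : ℤ) + 1)) (a (2 * (i : ℤ))) (a (2 * (i : ℤ) - 1)))
    = -2 ^ (2 * m - 1) * a (2 * (m : ℤ) - 1) +
      ∑ i ∈ Finset.range (2 * m - 1), 2 ^ i * a (i : ℤ) := by
  intro m hm
  induction m with
  | zero => omega
  | succ k ih =>
    rcases Nat.eq_or_lt_of_le hm with h | h
    · have hk0 : k = 0 := by omega
      subst hk0; simp [BoothB, ham1]
    · have hk : 1 ≤ k := by omega
      rw [Finset.sum_range_succ, ih hk]
      have h1 : 2 * (k + 1) - 1 = (2 * k - 1) + 2 := by omega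
      rw [h1, Finset.sum_range_succ, Finset.sum_range_succ]
      have h2 : ((2 * k - 1 : ℕ) : ℤ) = 2 * (k : ℤ) - 1 := by push_cast [hk]; omega
      have h5 : (4:ℤ) ^ k = 2 ^ (2*k - 1) * 2 := by
        rw [show (4:ℤ) = 2^2 by norm_num, ← pow_mul]
        rw [show 2 * k = (2*k - 1) + 1 by omega, pow_succ]; rfl
      push_cast
      rw [h2, h5, BoothB,
        show (2:ℤ) ^ (2*k-1+2) = 2 ^ (2*k-1) * 4 from by rw [pow_add]; norm_num,
        show (2:ℤ) ^ (2*k-1+1) = 2 ^ (2*k-1) * 2 from by rw [pow_succ],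
        show (2 * (k:ℤ) - 1 + 1) = 2 * k from by ring,
        show (2 * ((k:ℤ) + 1) - 1) = 2 * k + 1 from by ring]
      ring

/-- Double Booth Radix-4 encoding: both operands of a signed `n`-bit multiplication
(even `n`) are Booth Radix-4 encoded. -/
theorem double_booth_radix4_encoding (n : ℕ) (hn : Even n) (hpos : 0 < n)
    (a b : ℤ → ℤ)
    (ha : ∀ i : ℤ, a i = 0 ∨ a i = 1) (hb : ∀ i : ℤ, b i = 0 ∨ b i = 1)
    (ham1 : a (-1) = 0) (hbm1 : b (-1) = 0)
    (A Bv : ℤ)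
    (hA : A = -2 ^ (n - 1) * a ((n : ℤ) - 1) +
      ∑ i ∈ Finset.range (n - 1), 2 ^ i * a (i : ℤ))
    (hB : Bv = -2 ^ (n - 1) * b ((n : ℤ) - 1) +
      ∑ i ∈ Finset.range (n - 1), 2 ^ i * b (i : ℤ)) :
    A * Bv = ∑ i ∈ Finset.range (n / 2), ∑ j ∈ Finset.range (n / 2),
      4 ^ (i + j) *
        BoothB (a (2 * (i : ℤ) + 1)) (a (2 * (i : ℤ))) (a (2 * (i : ℤ) - 1)) *
        BoothB (b (2 * (j : ℤ) + 1)) (b (2 * (j : ℤ))) (b (2 * (j : ℤ) - 1)) := by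
  obtain ⟨m, hm⟩ := hn
  have hn2 : n = 2 * m := by omega
  have hm1 : 1 ≤ m := by omega
  have hd : n / 2 = m := by omega
  have hcast : ((n : ℤ) - 1) = 2 * (m : ℤ) - 1 := by
    rw [hn2]; push_cast; ring
  have hA' : A = ∑ i ∈ Finset.range m, 4 ^ i *
      BoothB (a (2 * (i : ℤ) + 1)) (a (2 * (i : ℤ))) (a (2 * (i : ℤ) - 1)) := by
    rw [hA, booth_key a ham1 m hm1, hn2]; norm_cast
  have hB' : Bv = ∑ j ∈ Finset.range m, 4 ^ j *
      BoothB (b (2 * (j : ℤ) + 1)) (b (2 * (j : ℤ))) (b (2 * (j : ℤ) - 1)) := by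
    rw [hB, booth_key b hbm1 m hm1, hn2]; norm_cast
  rw [hA', hB', hd, Finset.sum_mul_sum]
  apply Finset.sum_congr rfl; intro i _
  apply Finset.sum_congr rfl; intro j _
  rw [pow_add]; ring
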